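/- Let G be a graph with chromatic colouring c and let t ≥ 1. Consider the generalised windmill W = K_1 + (G_1 ∪ ... ∪ G_t), the join of a single vertex w with t disjoint copies of G, coloured by using the same chromatic colouring on each copy of G and a new colour on w. Then a set F ⊆ V(W) is a fade set of W if and only if F ∩ V(G_i) is a fade set of G_i for each i and w ∉ F; hence the fading number of W equals t times the fading number of G with respect to c. -/

import Mathlib

/-- The closed neighbourhood of `u` as a finset. -/
def closedNbr {V : Type*} [Fintype V] [DecidableEq V] (G : SimpleGraph V)
    [DecidableRel G.Adj] (u : V) : Finset V :=
  insert u (G.neighborFinset u)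

/-- `u` yields a rainbow neighbourhood: `N[u]` meets every colour class. -/
def YieldsRainbow {V : Type*} [Fintype V] [DecidableEq V] (G : SimpleGraph V)
    [DecidableRel G.Adj] {k : ℕ} (c : V → Fin k) (u : V) : Prop :=
  ∀ i : Fin k, ∃ v ∈ closedNbr G u, c v = i

/-- `F` is a fade set: every rainbow-yielding vertex still sees every colour
on vertices outside `F`. -/
def IsFadeSet {V : Type*} [Fintype V] [DecidableEq V] (G : SimpleGraph V)
    [DecidableRel G.Adj] {k : ℕ} (c : V → Fin k) (F : Finset V) : Prop :=
  ∀ u : V, YieldsRainbow G c u →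
    ∀ i : Fin k, ∃ v ∈ closedNbr G u, c v = i ∧ v ∉ F

/-- The fading number: the maximum cardinality of a fade set. -/
noncomputable def fadingNumber {V : Type*} [Fintype V] [DecidableEq V]
    (G : SimpleGraph V) [DecidableRel G.Adj] {k : ℕ} (c : V → Fin k) : ℕ :=
  sSup {m | ∃ F : Finset V, IsFadeSet G c F ∧ F.card = m}

/-- The generalised windmill `K₁ + (G₁ ∪ ... ∪ G_t)`: `none` is the central
vertex `w` and `some (i, v)` is the vertex `v` of the `i`-th copy of `G`. -/
def windmill {V : Type*} (G : SimpleGraph V) (t : ℕ) :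
    SimpleGraph (Option (Fin t × V)) where
  Adj u v :=
    match u, v with
    | some p, some q => p.1 = q.1 ∧ G.Adj p.2 q.2
    | some _, none => True
    | none, some _ => True
    | none, none => False
  symm := by
    constructor
    intro u v h
    match u, v with
    | some p, some q => exact ⟨h.1.symm, G.adj_symm h.2⟩
    | some _, none => trivial
    | none, some _ => trivial
  loopless := by
    constructor
    intro u h
    match u with
    | some p => exact G.irrefl h.2
    | none => exact h

instance windmill.decAdj {V : Type*} (G : SimpleGraph V) (t : ℕ)
    [DecidableRel G.Adj] [DecidableEq V] : DecidableRel (windmill G t).Adj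
  | some p, some q => inferInstanceAs (Decidable (p.1 = q.1 ∧ G.Adj p.2 q.2))
  | some _, none => inferInstanceAs (Decidable True)
  | none, some _ => inferInstanceAs (Decidable True)
  | none, none => inferInstanceAs (Decidable False)

/-- The chromatic colouring of the windmill: each copy of `G` is coloured by
`c` and the central vertex gets the new colour `c_{χ(G)+1}`. -/
def windmillColour {V : Type*} {k : ℕ} (c : V → Fin k) (t : ℕ) :
    Option (Fin t × V) → Fin (k + 1) :=
  fun u => u.elim (Fin.last k) (fun p => (c p.2).castSucc)

/-!
In a copy `G_i` every vertex already sees the centre `w`, which carries the only new colour,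
so `u ∈ G_i` is rainbow in `W` iff it is rainbow in `G`, and its closed neighbourhood in `W` is
its closed neighbourhood in `G_i` plus `w`. Hence the fade condition at such `u` is exactly the
fade condition of `F ∩ V(G_i)` in `G_i`, together with `w ∉ F` (nothing but `w` has the new
colour). The centre is rainbow as well, since a chromatic colouring uses every colour; its fade
condition follows from the others because a chromatic colouring always has a rainbow vertex
`u₀`, and the neighbours of `u₀` in `G_1` avoiding `F` supply every old colour to `w`.
Fade sets of `W` are thus exactly the sets avoiding `w` with fade slices, and their
sizes add up over the `t` slices.
-/

section ClosedNeighbourhood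

variable {V : Type*} [Fintype V] [DecidableEq V] (G : SimpleGraph V) [DecidableRel G.Adj]

lemma mem_closedNbr {u v : V} : v ∈ closedNbr G u ↔ v = u ∨ G.Adj u v := by
  simp [closedNbr]

lemma self_mem_closedNbr (u : V) : u ∈ closedNbr G u :=
  (mem_closedNbr G).2 (Or.inl rfl)

end ClosedNeighbourhood

section ChromaticColouring

variable {V : Type*} {G : SimpleGraph V} {k : ℕ}

lemma surjective_of_chromaticNumber_eq (hchrom : G.chromaticNumber = k) (c : V → Fin k)
    (hproper : ∀ u v : V, G.Adj u v → c u ≠ c v) : Function.Surjective c := by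
  intro j
  by_contra! hj
  let C : G.Coloring {i : Fin k // i ≠ j} :=
    SimpleGraph.Coloring.mk (fun v => ⟨c v, hj v⟩)
      (fun h hc => hproper _ _ h (congrArg Subtype.val hc))
  have hle : G.chromaticNumber ≤ (k - 1 : ℕ) := by
    simpa [Fintype.card_subtype_compl] using C.colorable.chromaticNumber_le
  rw [hchrom] at hle
  have := j.pos
  have : k ≤ k - 1 := by exact_mod_cast hle
  omega

/-- If no vertex were rainbow, every vertex of colour `0` could be recoloured by a colour
missing from its closed neighbourhood, leaving a proper colouring that misses colour `0`. -/
lemma exists_yieldsRainbow [Fintype V] [DecidableEq V] [DecidableRel G.Adj] (c : V → Fin k)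
    (hproper : ∀ u v : V, G.Adj u v → c u ≠ c v)
    (hchrom : G.chromaticNumber = k) (hk : 0 < k) : ∃ u : V, YieldsRainbow G c u := by
  by_contra! h
  have hmissing : ∀ u, ∃ i, ∀ v ∈ closedNbr G u, c v ≠ i := fun u => by
    simpa [YieldsRainbow] using h u
  choose m hm using hmissing
  let j₀ : Fin k := ⟨0, hk⟩
  let c' : V → Fin k := fun u => if c u = j₀ then m u else c u
  have hadj {u v : V} (huv : G.Adj u v) : v ∈ closedNbr G u := (mem_closedNbr G).2 (Or.inr huv)
  have hproper' : ∀ u v : V, G.Adj u v → c' u ≠ c' v := by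
    intro u v huv
    simp only [c']
    split_ifs with hu hv hv
    · exact absurd (hu.trans hv.symm) (hproper u v huv)
    · exact fun he => hm u v (hadj huv) he.symm
    · exact fun he => hm v u (hadj huv.symm) he
    · exact hproper u v huv
  obtain ⟨v, hv⟩ := surjective_of_chromaticNumber_eq hchrom c' hproper' j₀
  simp only [c'] at hv
  split_ifs at hv with hcv
  · exact hm v v (self_mem_closedNbr G v) (hcv.trans hv.symm)
  · exact hcv hv

end ChromaticColouring

section FadingNumber

variable {V : Type*} [Fintype V] [DecidableEq V] (G : SimpleGraph V) [DecidableRel G.Adj]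
  {k : ℕ} (c : V → Fin k)

lemma isFadeSet_empty : IsFadeSet G c ∅ := fun u hu i => by
  obtain ⟨v, hv, hcv⟩ := hu i
  exact ⟨v, hv, hcv, Finset.notMem_empty v⟩

lemma bddAbove_fadeSetCards :
    BddAbove {m | ∃ F : Finset V, IsFadeSet G c F ∧ F.card = m} := by
  refine ⟨Fintype.card V, ?_⟩
  rintro _ ⟨F, -, rfl⟩
  exact F.card_le_univ

lemma exists_isFadeSet_card_eq_fadingNumber :
    ∃ F : Finset V, IsFadeSet G c F ∧ F.card = fadingNumber G c :=
  Nat.sSup_mem (s := {m | ∃ F : Finset V, IsFadeSet G c F ∧ F.card = m})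
    ⟨0, ∅, isFadeSet_empty G c, Finset.card_empty⟩ (bddAbove_fadeSetCards G c)

variable {G c}

lemma card_le_fadingNumber {F : Finset V} (hF : IsFadeSet G c F) :
    F.card ≤ fadingNumber G c :=
  le_csSup (bddAbove_fadeSetCards G c) ⟨F, hF, rfl⟩

lemma fadingNumber_le {m : ℕ} (h : ∀ F : Finset V, IsFadeSet G c F → F.card ≤ m) :
    fadingNumber G c ≤ m := by
  obtain ⟨F, hF, hcard⟩ := exists_isFadeSet_card_eq_fadingNumber G c
  exact hcard ▸ h F hF

end FadingNumber

section WindmillVertexSets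

variable {V : Type*} {k : ℕ} (c : V → Fin k) {t : ℕ}

@[simp] lemma windmillColour_none : windmillColour c t none = Fin.last k := rfl

@[simp] lemma windmillColour_some (p : Fin t × V) :
    windmillColour c t (some p) = (c p.2).castSucc := rfl

/-- `F ∩ V(G_i)`, as a set of vertices of `G`. -/
noncomputable def windmillSlice (F : Finset (Option (Fin t × V))) (i : Fin t) : Finset V :=
  F.preimage (fun v => some (i, v)) (by intro a _ b _ h; simpa using h)

@[simp] lemma mem_windmillSlice {F : Finset (Option (Fin t × V))} {i : Fin t} {x : V} :
    x ∈ windmillSlice F i ↔ some (i, x) ∈ F :=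
  Finset.mem_preimage

lemma card_eq_sum_card_windmillSlice {F : Finset (Option (Fin t × V))} (hnone : none ∉ F) :
    F.card = ∑ i, (windmillSlice F i).card := by
  rw [← Finset.card_eraseNone_of_not_mem hnone,
    Finset.card_eq_sum_card_fiberwise (f := Prod.fst) (t := Finset.univ) (by simp)]
  refine Finset.sum_congr rfl fun i _ => ?_
  refine Finset.card_nbij' Prod.snd (Prod.mk i) ?_ ?_ ?_ ?_
  · rintro ⟨i', x⟩ hx
    obtain ⟨hx, rfl⟩ := by simpa using hx
    simpa using hx
  · intro x hx
    simpa using hx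
  · rintro ⟨i', x⟩ hx
    obtain ⟨-, rfl⟩ := by simpa using hx
    rfl
  · exact fun _ _ => rfl

def windmillLift (t : ℕ) (S : Finset V) : Finset (Option (Fin t × V)) :=
  (Finset.univ ×ˢ S).map Function.Embedding.some

lemma none_notMem_windmillLift (S : Finset V) : none ∉ windmillLift t S := by
  simp [windmillLift]

lemma windmillSlice_windmillLift (S : Finset V) (i : Fin t) :
    windmillSlice (windmillLift t S) i = S := by
  ext x
  simp [windmillLift]

lemma card_windmillLift (S : Finset V) : (windmillLift t S).card = t * S.card := by
  simp [windmillLift]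

end WindmillVertexSets

section Windmill

variable {V : Type*} [Fintype V] [DecidableEq V] (G : SimpleGraph V) [DecidableRel G.Adj]
  {k : ℕ} (c : V → Fin k) {t : ℕ}

lemma mem_closedNbr_windmill_some {i i' : Fin t} {x y : V} :
    some (i', y) ∈ closedNbr (windmill G t) (some (i, x)) ↔ i' = i ∧ y ∈ closedNbr G x := by
  simp only [mem_closedNbr, Option.some.injEq, Prod.mk.injEq]
  change (i' = i ∧ y = x) ∨ (i = i' ∧ G.Adj x y) ↔ _
  grind

lemma none_mem_closedNbr_windmill (u : Option (Fin t × V)) :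
    none ∈ closedNbr (windmill G t) u := by
  rcases u with _ | p
  · exact self_mem_closedNbr _ _
  · exact (mem_closedNbr _).2 (Or.inr trivial)

lemma mem_closedNbr_windmill_none (v : Option (Fin t × V)) :
    v ∈ closedNbr (windmill G t) none := by
  rcases v with _ | p
  · exact self_mem_closedNbr _ _
  · exact (mem_closedNbr _).2 (Or.inr trivial)

lemma yieldsRainbow_windmill_some_iff {i : Fin t} {x : V} :
    YieldsRainbow (windmill G t) (windmillColour c t) (some (i, x)) ↔ YieldsRainbow G c x := by
  constructor
  · intro h j
    obtain ⟨_ | ⟨i', y⟩, hv, hcv⟩ := h j.castSucc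
    · exact absurd hcv (Fin.castSucc_lt_last j).ne'
    · exact ⟨y, ((mem_closedNbr_windmill_some G).1 hv).2, Fin.castSucc_injective k hcv⟩
  · intro h j
    induction j using Fin.lastCases with
    | last => exact ⟨none, none_mem_closedNbr_windmill G _, rfl⟩
    | cast j =>
      obtain ⟨y, hy, hcy⟩ := h j
      exact ⟨some (i, y), (mem_closedNbr_windmill_some G).2 ⟨rfl, hy⟩, by simp [hcy]⟩

lemma yieldsRainbow_windmill_none (hc : Function.Surjective c) (i₀ : Fin t) :
    YieldsRainbow (windmill G t) (windmillColour c t) none := by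
  intro j
  induction j using Fin.lastCases with
  | last => exact ⟨none, mem_closedNbr_windmill_none G _, rfl⟩
  | cast j =>
    obtain ⟨v, hv⟩ := hc j
    exact ⟨some (i₀, v), mem_closedNbr_windmill_none G _, by simp [hv]⟩

variable {G c}

lemma isFadeSet_windmillSlice {F : Finset (Option (Fin t × V))}
    (hF : IsFadeSet (windmill G t) (windmillColour c t) F) (i : Fin t) :
    IsFadeSet G c (windmillSlice F i) := by
  intro x hx j
  obtain ⟨_ | ⟨i', y⟩, hv, hcv, hvF⟩ :=
    hF (some (i, x)) ((yieldsRainbow_windmill_some_iff G c).2 hx) j.castSucc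
  · exact absurd hcv (Fin.castSucc_lt_last j).ne'
  · obtain ⟨rfl, hy⟩ := (mem_closedNbr_windmill_some G).1 hv
    exact ⟨y, hy, Fin.castSucc_injective k hcv, mem_windmillSlice.not.2 hvF⟩

lemma none_notMem_of_isFadeSet_windmill (hc : Function.Surjective c) (i₀ : Fin t)
    {F : Finset (Option (Fin t × V))} (hF : IsFadeSet (windmill G t) (windmillColour c t) F) :
    none ∉ F := by
  obtain ⟨_ | p, -, hcv, hvF⟩ := hF none (yieldsRainbow_windmill_none G c hc i₀) (Fin.last k)
  · exact hvF
  · exact absurd hcv (Fin.castSucc_lt_last _).ne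

lemma isFadeSet_windmill_of_slices (hproper : ∀ u v : V, G.Adj u v → c u ≠ c v)
    (hchrom : G.chromaticNumber = k) (i₀ : Fin t)
    {F : Finset (Option (Fin t × V))} (hnone : none ∉ F)
    (hslices : ∀ i, IsFadeSet G c (windmillSlice F i)) :
    IsFadeSet (windmill G t) (windmillColour c t) F := by
  rintro (_ | ⟨i, x⟩) hu j
  all_goals induction j using Fin.lastCases with
    | last => exact ⟨none, none_mem_closedNbr_windmill G _, rfl, hnone⟩
    | cast j => ?_
  · obtain ⟨u₀, hu₀⟩ := exists_yieldsRainbow c hproper hchrom j.pos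
    obtain ⟨y, -, hcy, hyF⟩ := hslices i₀ u₀ hu₀ j
    exact ⟨some (i₀, y), mem_closedNbr_windmill_none G _, by simp [hcy],
      mem_windmillSlice.not.1 hyF⟩
  · obtain ⟨y, hy, hcy, hyF⟩ :=
      hslices i x ((yieldsRainbow_windmill_some_iff G c).1 hu) j
    exact ⟨some (i, y), (mem_closedNbr_windmill_some G).2 ⟨rfl, hy⟩, by simp [hcy],
      mem_windmillSlice.not.1 hyF⟩

lemma isFadeSet_windmill_iff (hproper : ∀ u v : V, G.Adj u v → c u ≠ c v)
    (hchrom : G.chromaticNumber = k) (i₀ : Fin t) (F : Finset (Option (Fin t × V))) :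
    IsFadeSet (windmill G t) (windmillColour c t) F ↔
      none ∉ F ∧ ∀ i, IsFadeSet G c (windmillSlice F i) :=
  ⟨fun hF => ⟨none_notMem_of_isFadeSet_windmill
      (surjective_of_chromaticNumber_eq hchrom c hproper) i₀ hF, isFadeSet_windmillSlice hF⟩,
    fun ⟨hnone, hslices⟩ => isFadeSet_windmill_of_slices hproper hchrom i₀ hnone hslices⟩

lemma fadingNumber_windmill (hproper : ∀ u v : V, G.Adj u v → c u ≠ c v)
    (hchrom : G.chromaticNumber = k) (i₀ : Fin t) :
    fadingNumber (windmill G t) (windmillColour c t) = t * fadingNumber G c := by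
  have hiff := isFadeSet_windmill_iff hproper hchrom i₀
  refine le_antisymm (fadingNumber_le fun F hF => ?_) ?_
  · obtain ⟨hnone, hslices⟩ := (hiff F).1 hF
    calc F.card = ∑ i, (windmillSlice F i).card := card_eq_sum_card_windmillSlice hnone
      _ ≤ ∑ _i : Fin t, fadingNumber G c :=
          Finset.sum_le_sum fun i _ => card_le_fadingNumber (hslices i)
      _ = t * fadingNumber G c := by simp
  · obtain ⟨S, hS, hcard⟩ := exists_isFadeSet_card_eq_fadingNumber G c
    rw [← hcard, ← card_windmillLift]
    refine card_le_fadingNumber ((hiff _).2 ⟨none_notMem_windmillLift S, fun i => ?_⟩)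
    rwa [windmillSlice_windmillLift]

end Windmill

theorem stmt_19 {V : Type*} [Fintype V] [DecidableEq V] (G : SimpleGraph V)
    [DecidableRel G.Adj] {k : ℕ} (c : V → Fin k)
    (hproper : ∀ u v : V, G.Adj u v → c u ≠ c v)
    (hchrom : G.chromaticNumber = k) (t : ℕ) (ht : 1 ≤ t) :
    (∀ F : Finset (Option (Fin t × V)),
      IsFadeSet (windmill G t) (windmillColour c t) F ↔
        (none ∉ F ∧ ∀ i : Fin t,
          IsFadeSet G c (F.preimage (fun v => some (i, v))
            (by intro a _ b _ h; simpa using h)))) ∧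
    fadingNumber (windmill G t) (windmillColour c t) = t * fadingNumber G c :=
  ⟨isFadeSet_windmill_iff hproper hchrom ⟨0, ht⟩, fadingNumber_windmill hproper hchrom ⟨0, ht⟩⟩
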